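/- For the distorted Freudenthal simplex σ_δ in ℝ^d with 0 < δ ≤ 1, the edge length between vertices v^i_δ and v^j_δ with i < j equals √((j-i)(d - (1-δ²)(j-i)))/√d. Consequently, the maximum edge length equals δ√d when 1/√2 ≤ δ ≤ 1, and √d/(2√(1-δ²)) when 0 < δ ≤ 1/√2 and d is even (more generally, the maximum of √(dx-(1-δ²)x²)/√d over integers 1 ≤ x ≤ d). -/

import Mathlib

/-!
Put `m = j - i` and `c = (1 - δ) / d`. The vector `v^j_δ - v^i_δ` is the indicator of `m`
coordinates minus `c m 𝟙`, so its squared length is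
`m - 2 c m² + d c² m² = m (d - (1 - δ²) m) / d`. Edge lengths therefore depend only on the
gap `m ∈ [1, d]`, and the set of edge lengths is the image of `[1, d]` under
`m ↦ √(d m - (1 - δ²) m²) / √d`. When `δ² ≥ 1/2` this function increases on `[0, d]`,
because `g(d) - g(m) = (d - m)(d - (1 - δ²)(d + m)) ≥ 0` for `g(m) = d m - (1 - δ²) m²`,
so the longest edge is `v^0_δ v^d_δ`, of length `δ √d`.
-/
open Finset

/-- Vertices of the diagonally distorted Freudenthal simplex:
`v^i_δ = T_δ(v^i)` where `v^i ∈ {0,1}^d` has its last `i` coordinates equal to `1`,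
i.e. `v^i_δ = (1/d)·(-i+iδ,…,-i+iδ, d-i+iδ,…,d-i+iδ)` with `d-i` copies of the first
value and `i` copies of the second. -/
noncomputable def vFT (d : ℕ) (δ : ℝ) (i : Fin (d + 1)) : EuclideanSpace ℝ (Fin d) :=
  WithLp.toLp 2 fun (k : Fin d) => (if d - (i : ℕ) ≤ (k : ℕ) then (1 : ℝ) else 0) - ((1 - δ) / d) * (i : ℕ)

/-- The point `C_δ = δ²·(1/2,…,1/2) + (1-δ²)·(1/(2d))·(-d+1, -d+3, …, d-3, d-1)`. -/
noncomputable def cFT (d : ℕ) (δ : ℝ) : EuclideanSpace ℝ (Fin d) :=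
  WithLp.toLp 2 fun (k : Fin d) => δ ^ 2 * (1 / 2) + (1 - δ ^ 2) * ((-(d : ℝ) + 1 + 2 * (k : ℕ)) / (2 * d))

lemma Finset.isGreatest_image_sup' {ι α : Type*} [LinearOrder α] {s : Finset ι} (H : s.Nonempty)
    (f : ι → α) : IsGreatest (f '' s) (s.sup' H f) := by
  obtain ⟨i, hi, hmax⟩ := s.exists_mem_eq_sup' H f
  exact ⟨⟨i, hi, hmax.symm⟩, by rintro _ ⟨x, hx, rfl⟩; exact s.le_sup' f hx⟩

lemma Fin.sum_ite_sub_le (d n : ℕ) (hn : n ≤ d) :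
    ∑ k : Fin d, (if d - n ≤ (k : ℕ) then (1 : ℝ) else 0) = n := by
  rw [Fin.sum_univ_eq_sum_range (fun k => if d - n ≤ k then (1 : ℝ) else 0), sum_boole,
    range_eq_Ico, Ico_filter_le, Nat.card_Ico]
  norm_cast
  omega

lemma dist_vFT_sq (d : ℕ) (δ : ℝ) {i j : Fin (d + 1)} (hij : i ≤ j) :
    dist (vFT d δ i) (vFT d δ j) ^ 2 =
      ((j : ℕ) - (i : ℕ) : ℝ) * (d - (1 - δ ^ 2) * ((j : ℕ) - (i : ℕ))) / d := by
  rcases d.eq_zero_or_pos with rfl | hd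
  · simp [Subsingleton.elim (vFT 0 δ i) (vFT 0 δ j)]
  -- `(e - c m)² = (c m)² - (2 c m - 1) e` for the indicator `e ∈ {0, 1}`
  have hterm : ∀ k : Fin d, dist (vFT d δ i k) (vFT d δ j k) ^ 2 =
      ((1 - δ) / d * ((j : ℕ) - (i : ℕ))) ^ 2 -
        (2 * ((1 - δ) / d * ((j : ℕ) - (i : ℕ))) - 1) *
          ((if d - (j : ℕ) ≤ (k : ℕ) then (1 : ℝ) else 0) -
            (if d - (i : ℕ) ≤ (k : ℕ) then (1 : ℝ) else 0)) := by
    intro k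
    have hmono : d - (i : ℕ) ≤ k → d - (j : ℕ) ≤ k := fun h => by
      rw [Fin.le_def] at hij
      omega
    rw [Real.dist_eq, sq_abs]
    simp only [vFT, PiLp.toLp_apply]
    split_ifs <;> first | exact absurd (hmono ‹_›) ‹_› | ring
  rw [EuclideanSpace.dist_eq, Real.sq_sqrt (by positivity), sum_congr rfl fun k _ => hterm k,
    sum_sub_distrib, ← mul_sum, sum_sub_distrib, Fin.sum_ite_sub_le d j (by omega),
    Fin.sum_ite_sub_le d i (by omega), sum_const, card_univ, Fintype.card_fin, nsmul_eq_mul]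
  field_simp
  ring

lemma dist_vFT (d : ℕ) (δ : ℝ) {i j : Fin (d + 1)} (hij : i ≤ j) :
    dist (vFT d δ i) (vFT d δ j) =
      √(((j : ℕ) - (i : ℕ) : ℝ) * (d - (1 - δ ^ 2) * ((j : ℕ) - (i : ℕ)))) / √d := by
  rw [← Real.sqrt_div' _ d.cast_nonneg, ← dist_vFT_sq d δ hij, Real.sqrt_sq dist_nonneg]

noncomputable def edgeLength (d : ℕ) (δ : ℝ) (x : ℕ) : ℝ :=
  √((d : ℝ) * x - (1 - δ ^ 2) * (x : ℝ) ^ 2) / √d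

lemma dist_vFT_eq_edgeLength (d : ℕ) (δ : ℝ) {i j : Fin (d + 1)} (hij : i ≤ j) :
    dist (vFT d δ i) (vFT d δ j) = edgeLength d δ (j - i) := by
  rw [dist_vFT d δ hij, edgeLength, Nat.cast_sub (Fin.le_def.1 hij)]
  ring_nf

lemma edgeLengths_eq_image (d : ℕ) (δ : ℝ) :
    {l | ∃ i j : Fin (d + 1), i < j ∧ l = dist (vFT d δ i) (vFT d δ j)} =
      edgeLength d δ '' (Icc 1 d : Finset ℕ) := by
  ext l
  constructor
  · rintro ⟨i, j, hij, rfl⟩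
    have hj := j.is_le
    rw [Fin.lt_def] at hij
    exact ⟨j - i, mem_Icc.2 ⟨by omega, by omega⟩, (dist_vFT_eq_edgeLength d δ hij.le).symm⟩
  · rintro ⟨x, hx, rfl⟩
    obtain ⟨hx1, hxd⟩ := mem_Icc.1 hx
    refine ⟨0, ⟨x, by omega⟩, Fin.lt_def.2 hx1, ?_⟩
    rw [dist_vFT_eq_edgeLength d δ (Fin.zero_le _)]
    rfl

lemma edgeLength_self (d : ℕ) {δ : ℝ} (hδ : 0 ≤ δ) : edgeLength d δ d = δ * √d := by
  rw [edgeLength, show (d : ℝ) * d - (1 - δ ^ 2) * (d : ℝ) ^ 2 = (δ * d) ^ 2 by ring,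
    Real.sqrt_sq (by positivity), mul_div_assoc, Real.div_sqrt]

lemma edgeLength_le_edgeLength_self (d : ℕ) {δ : ℝ} (hδ : 1 / 2 ≤ δ ^ 2) {x : ℕ}
    (hx : x ≤ d) :
    edgeLength d δ x ≤ edgeLength d δ d := by
  have hxd : (x : ℝ) ≤ d := by exact_mod_cast hx
  have hx0 : (0 : ℝ) ≤ x := x.cast_nonneg
  have hgap : 0 ≤ (d - x) * (d - (1 - δ ^ 2) * (d + x)) :=
    mul_nonneg (sub_nonneg.2 hxd) (by nlinarith)
  exact div_le_div_of_nonneg_right (Real.sqrt_le_sqrt (by linarith)) (Real.sqrt_nonneg _)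

theorem stmt_11_general (d : ℕ) (hd : 0 < d) (δ : ℝ) :
    let S : Set ℝ :=
      {l | ∃ i j : Fin (d + 1), i < j ∧ l = dist (vFT d δ i) (vFT d δ j)}
    (∀ i j : Fin (d + 1), i < j →
        dist (vFT d δ i) (vFT d δ j) =
          Real.sqrt ((((j : ℕ) : ℝ) - ((i : ℕ) : ℝ)) *
            ((d : ℝ) - (1 - δ ^ 2) * (((j : ℕ) : ℝ) - ((i : ℕ) : ℝ)))) /
            Real.sqrt d) ∧
      (1 / Real.sqrt 2 ≤ δ → IsGreatest S (δ * Real.sqrt d)) ∧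
      IsGreatest S ((Finset.Icc 1 d).sup' (Finset.nonempty_Icc.2 hd)
        fun x : ℕ => Real.sqrt ((d : ℝ) * x - (1 - δ ^ 2) * (x : ℝ) ^ 2) /
          Real.sqrt d) := by
  intro S
  have hS : S = edgeLength d δ '' (Icc 1 d : Finset ℕ) := edgeLengths_eq_image d δ
  refine ⟨fun i j hij => dist_vFT d δ hij.le, fun hδ => ?_, ?_⟩
  · have hδ0 : 0 ≤ δ := le_trans (by positivity) hδ
    have hδ2 : 1 / 2 ≤ δ ^ 2 := by
      calc 1 / 2 = (1 / √2) ^ 2 := by rw [div_pow, Real.sq_sqrt zero_le_two, one_pow]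
        _ ≤ δ ^ 2 := by gcongr
    rw [hS, ← edgeLength_self d hδ0]
    refine ⟨⟨d, mem_Icc.2 ⟨hd, le_rfl⟩, rfl⟩, ?_⟩
    rintro _ ⟨x, hx, rfl⟩
    exact edgeLength_le_edgeLength_self d hδ2 (mem_Icc.1 hx).2
  · rw [hS]
    exact (Icc 1 d).isGreatest_image_sup' _ (edgeLength d δ)

/-- the edge length between `v^i_δ` and `v^j_δ` (`i < j`) equals
`√((j-i)(d - (1-δ²)(j-i)))/√d`. Consequently the maximum edge length equals
`δ√d` when `1/√2 ≤ δ ≤ 1`, and in general equals the maximum of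
`√(dx - (1-δ²)x²)/√d` over integers `1 ≤ x ≤ d`. -/
theorem stmt_11 (d : ℕ) (hd : 0 < d) (δ : ℝ) (h0 : 0 < δ) (h1 : δ ≤ 1) :
    let S : Set ℝ :=
      {l | ∃ i j : Fin (d + 1), i < j ∧ l = dist (vFT d δ i) (vFT d δ j)}
    (∀ i j : Fin (d + 1), i < j →
        dist (vFT d δ i) (vFT d δ j) =
          Real.sqrt ((((j : ℕ) : ℝ) - ((i : ℕ) : ℝ)) *
            ((d : ℝ) - (1 - δ ^ 2) * (((j : ℕ) : ℝ) - ((i : ℕ) : ℝ)))) /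
            Real.sqrt d) ∧
      (1 / Real.sqrt 2 ≤ δ → IsGreatest S (δ * Real.sqrt d)) ∧
      IsGreatest S ((Finset.Icc 1 d).sup' (Finset.nonempty_Icc.2 hd)
        fun x : ℕ => Real.sqrt ((d : ℝ) * x - (1 - δ ^ 2) * (x : ℝ) ^ 2) /
          Real.sqrt d) :=
  stmt_11_general d hd δ
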